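/- For any H, R, F ∈ K = ℂ(x,y) with dF ∧ dR = 0, the triple of rational 1-forms (dH + (F − H²/2)·dR, H·dR, dR) is a projective triple. (This is the normal form of a rational pull-back of the Riccati foliation dy − (y²/2 − φ(x))dx.) -/

import Mathlib

open MvPolynomial

noncomputable section

/-- The field of rational functions `ℂ(x,y)`. -/
abbrev RatF : Type := FractionRing (MvPolynomial (Fin 2) ℂ)

/-- Wedge product of two rational 1-forms: `ω ∧ θ = ω₁ θ₂ - ω₂ θ₁`. -/
def wedge (ω θ : RatF × RatF) : RatF := ω.1 * θ.2 - ω.2 * θ.1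

/-- Exterior derivative of a rational 1-form: `dω = ∂x ω₂ - ∂y ω₁`. -/
def extd (dx dy : Derivation ℂ RatF RatF) (ω : RatF × RatF) : RatF := dx ω.2 - dy ω.1

/-- Differential of a rational function: `dF = (∂x F, ∂y F)`. -/
def d0 (dx dy : Derivation ℂ RatF RatF) (F : RatF) : RatF × RatF := (dx F, dy F)

/-- The derivations `dx`, `dy` extend the partial derivatives on `ℂ[x,y]`. -/
def ExtendsPartials (dx dy : Derivation ℂ RatF RatF) : Prop :=
  (∀ p : MvPolynomial (Fin 2) ℂ,
      dx (algebraMap (MvPolynomial (Fin 2) ℂ) RatF p)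
        = algebraMap (MvPolynomial (Fin 2) ℂ) RatF (pderiv 0 p)) ∧
  (∀ p : MvPolynomial (Fin 2) ℂ,
      dy (algebraMap (MvPolynomial (Fin 2) ℂ) RatF p)
        = algebraMap (MvPolynomial (Fin 2) ℂ) RatF (pderiv 1 p))

/-- `(Ω, η, ξ)` is a projective triple: (Proj.1) `dΩ = η∧Ω`, (Proj.2) `dη = Ω∧ξ`,
(Proj.3) `dξ = ξ∧η`. -/
def IsProjTriple (dx dy : Derivation ℂ RatF RatF) (Ω η ξ : RatF × RatF) : Prop :=
  extd dx dy Ω = wedge η Ω ∧ extd dx dy η = wedge Ω ξ ∧ extd dx dy ξ = wedge ξ η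

/-!
Write `G = F - H²/2`. Mixed partials commute on `ℂ(x,y)`, because `⁅∂x, ∂y⁆` is a derivation
vanishing on `ℂ[x,y]`; hence `d ∘ d = 0`, and with the Leibniz rule `d(f ω) = df ∧ ω + f dω`
all three identities collapse to wedge algebra. (Proj.2) and (Proj.3) are then immediate, while
(Proj.1) reads `dG ∧ dR = -H dH ∧ dR`, which is exactly `dF ∧ dR = 0`.
-/

theorem Derivation.eq_zero_of_isFractionRing {R A K : Type*} [CommRing R] [CommRing A] [IsDomain A]
    [Field K] [Algebra R K] [Algebra A K] [IsFractionRing A K] (D : Derivation R K K)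
    (h : ∀ a : A, D (algebraMap A K a) = 0) : D = 0 := by
  ext z
  obtain ⟨a, b, -, rfl⟩ := IsFractionRing.div_surjective (A := A) z
  simp [Derivation.leibniz_div, h]

theorem MvPolynomial.pderiv_comm {σ R : Type*} [CommRing R] (i j : σ) (p : MvPolynomial σ R) :
    pderiv i (pderiv j p) = pderiv j (pderiv i p) := by
  classical
  have : ⁅pderiv i, pderiv j⁆ = (0 : Derivation R (MvPolynomial σ R) (MvPolynomial σ R)) :=
    derivation_ext fun k => by
      rw [Derivation.commutator_apply]
      simp only [pderiv_X, Pi.single_apply]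
      split_ifs <;> simp
  rw [← sub_eq_zero, ← Derivation.commutator_apply, this, Derivation.zero_apply]

theorem ExtendsPartials.lie_eq_zero {dx dy : Derivation ℂ RatF RatF} (hext : ExtendsPartials dx dy) :
    ⁅dx, dy⁆ = 0 :=
  Derivation.eq_zero_of_isFractionRing (A := MvPolynomial (Fin 2) ℂ) _ fun p => by
    rw [Derivation.commutator_apply, hext.1, hext.2, hext.1, hext.2, pderiv_comm, sub_self]

theorem wedge_self (ω : RatF × RatF) : wedge ω ω = 0 := by
  simp only [wedge]; ring

theorem wedge_anticomm (ω θ : RatF × RatF) : wedge ω θ = -wedge θ ω := by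
  simp only [wedge]; ring

theorem wedge_add_left (ω ω' θ : RatF × RatF) : wedge (ω + ω') θ = wedge ω θ + wedge ω' θ := by
  simp only [wedge, Prod.fst_add, Prod.snd_add]; ring

theorem wedge_add_right (ω θ θ' : RatF × RatF) : wedge ω (θ + θ') = wedge ω θ + wedge ω θ' := by
  simp only [wedge, Prod.fst_add, Prod.snd_add]; ring

theorem wedge_sub_left (ω ω' θ : RatF × RatF) : wedge (ω - ω') θ = wedge ω θ - wedge ω' θ := by
  simp only [wedge, Prod.fst_sub, Prod.snd_sub]; ring

theorem wedge_smul_left (f : RatF) (ω θ : RatF × RatF) : wedge (f • ω) θ = f * wedge ω θ := by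
  simp only [wedge, Prod.smul_fst, Prod.smul_snd, smul_eq_mul]; ring

theorem wedge_smul_right (f : RatF) (ω θ : RatF × RatF) : wedge ω (f • θ) = f * wedge ω θ := by
  simp only [wedge, Prod.smul_fst, Prod.smul_snd, smul_eq_mul]; ring

section ExteriorCalculus

variable (dx dy : Derivation ℂ RatF RatF)

theorem d0_sub (f g : RatF) : d0 dx dy (f - g) = d0 dx dy f - d0 dx dy g := by
  simp [d0]

theorem d0_sq_div_two (f : RatF) : d0 dx dy (f ^ 2 / 2) = f • d0 dx dy f := by
  have key (D : Derivation ℂ RatF RatF) : D (f ^ 2 / 2) = f * D f := by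
    rw [Derivation.leibniz_div_const (h := by simpa using D.map_natCast 2),
      Derivation.leibniz_pow]
    field_simp
    simp
  simp only [d0, key, Prod.smul_mk, smul_eq_mul]

theorem extd_add (ω θ : RatF × RatF) : extd dx dy (ω + θ) = extd dx dy ω + extd dx dy θ := by
  simp only [extd, Prod.fst_add, Prod.snd_add, map_add]; ring

theorem extd_smul (f : RatF) (ω : RatF × RatF) :
    extd dx dy (f • ω) = wedge (d0 dx dy f) ω + f * extd dx dy ω := by
  simp only [extd, wedge, d0, Prod.smul_fst, Prod.smul_snd, smul_eq_mul, Derivation.leibniz]; ring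

theorem extd_d0 (f : RatF) : extd dx dy (d0 dx dy f) = ⁅dx, dy⁆ f :=
  rfl

end ExteriorCalculus

/-- For `H, R, F ∈ K` with `dF ∧ dR = 0`, the triple
`(dH + (F - H²/2) dR, H dR, dR)` is a projective triple. -/
theorem riccati_pullback_projTriple (dx dy : Derivation ℂ RatF RatF)
    (hext : ExtendsPartials dx dy) (H R F : RatF)
    (hFR : wedge (d0 dx dy F) (d0 dx dy R) = 0) :
    IsProjTriple dx dy (d0 dx dy H + (F - H ^ 2 / 2) • d0 dx dy R)
      (H • d0 dx dy R) (d0 dx dy R) := by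
  have hdd (f : RatF) : extd dx dy (d0 dx dy f) = 0 := by
    rw [extd_d0, hext.lie_eq_zero, Derivation.zero_apply]
  refine ⟨?_, ?_, ?_⟩
  · calc extd dx dy (d0 dx dy H + (F - H ^ 2 / 2) • d0 dx dy R)
        = wedge (d0 dx dy F - H • d0 dx dy H) (d0 dx dy R) := by
          rw [extd_add, extd_smul, hdd, hdd, d0_sub, d0_sq_div_two]; ring
      _ = wedge (H • d0 dx dy R) (d0 dx dy H + (F - H ^ 2 / 2) • d0 dx dy R) := by
          rw [wedge_sub_left, hFR, wedge_smul_left, wedge_smul_left, wedge_add_right,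
            wedge_smul_right, wedge_self, wedge_anticomm (d0 dx dy R)]; ring
  · rw [extd_smul, hdd, wedge_add_left, wedge_smul_left, wedge_self]; ring
  · rw [hdd, wedge_smul_right, wedge_self, mul_zero]
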